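/- arXiv:1803.08363 — 2 statements merged into one kernel-verified Lean document; each statement's English description precedes it below -/
import Mathlib

section
/- For n ≥ 1, t > 0 fixed, and f_n(P) = P^{n-1} e^{-t/P} defined for P > 0, the (n-1)st derivative of f_n satisfies f_n^{(n-1)}(P) = (n-1)! · e^{-t/P} · ∑_{i=0}^{n-1} (t/P)^i / i! for all P > 0. -/
/-!
With `g_m(P) = P^m e^{-t/P}` we have `g_{m+1}(P) = P · g_m(P)`, so Leibniz's rule gives
`D^{m+1} g_{m+1} = P · D^{m+1} g_m + (m + 1) · D^m g_m`. By induction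
`D^m g_m = m! e^{-x} ∑_{i ≤ m} x^i / i!` with `x = t / P`; the derivative of
`e^{-x} ∑_{i ≤ m} x^i / i!` telescopes to `-e^{-x} x^m / m!`, which supplies exactly the new term
`x^{m+1} / (m+1)!` of the partial sum.
-/

open Finset Real Filter Topology

theorem iteratedDeriv_succ_id_mul {𝕜 : Type*} [NontriviallyNormedField 𝕜] {n : ℕ} {g : 𝕜 → 𝕜}
    {x : 𝕜} (hg : ContDiffAt 𝕜 (n + 1) g x) :
    iteratedDeriv (n + 1) (fun y => y * g y) x
      = x * iteratedDeriv (n + 1) g x + (n + 1) * iteratedDeriv n g x := by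
  rw [iteratedDeriv_fun_mul (by fun_prop) (mod_cast hg), sum_range_succ', sum_range_succ']
  simp [iteratedDeriv_fun_id, add_comm]

theorem hasDerivAt_exp_neg_mul_sum_pow_div_factorial (m : ℕ) (x : ℝ) :
    HasDerivAt (fun x => exp (-x) * ∑ i ∈ range (m + 1), x ^ i / i.factorial)
      (-(exp (-x) * x ^ m / m.factorial)) x := by
  induction m with
  | zero => simpa using (hasDerivAt_neg x).exp
  | succ m ih =>
    have hterm := (hasDerivAt_neg x).exp.fun_mul
      ((hasDerivAt_pow (m + 1) x).div_const ((m + 1).factorial : ℝ))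
    have hsplit : (fun x => exp (-x) * ∑ i ∈ range (m + 2), x ^ i / i.factorial) = fun x =>
        exp (-x) * ∑ i ∈ range (m + 1), x ^ i / i.factorial
          + exp (-x) * (x ^ (m + 1) / (m + 1).factorial) := by
      ext; rw [sum_range_succ, mul_add]
    rw [hsplit]
    refine (ih.fun_add hterm).congr_deriv ?_
    rw [Nat.factorial_succ]
    push_cast
    field_simp
    ring

theorem iteratedDeriv_pow_mul_exp_neg_div (t : ℝ) (m : ℕ) {P : ℝ} (hP : 0 < P) :
    iteratedDeriv m (fun P => P ^ m * exp (-t / P)) P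
      = m.factorial * exp (-t / P) * ∑ i ∈ range (m + 1), (t / P) ^ i / i.factorial := by
  induction m generalizing P with
  | zero => simp
  | succ m ih =>
    have hsmooth : ContDiffAt ℝ (m + 1) (fun P => P ^ m * exp (-t / P)) P := by
      fun_prop (disch := exact hP.ne')
    have hlocal : iteratedDeriv m (fun P => P ^ m * exp (-t / P)) =ᶠ[𝓝 P] fun P =>
        m.factorial * (exp (-(t / P)) * ∑ i ∈ range (m + 1), (t / P) ^ i / i.factorial) := by
      filter_upwards [Ioi_mem_nhds hP] with Q hQ
      rw [ih hQ, neg_div, mul_assoc]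
    have hquot : HasDerivAt (fun P => t / P) (-(t / P ^ 2)) P := by
      simpa [div_eq_mul_inv] using (hasDerivAt_inv hP.ne').const_mul t
    have hderiv : HasDerivAt
        (fun P => m.factorial * (exp (-(t / P)) * ∑ i ∈ range (m + 1), (t / P) ^ i / i.factorial))
        (m.factorial * (-(exp (-(t / P)) * (t / P) ^ m / m.factorial) * -(t / P ^ 2))) P :=
      ((hasDerivAt_exp_neg_mul_sum_pow_div_factorial m (t / P)).comp P hquot).const_mul _
    have hshift : (fun P => P ^ (m + 1) * exp (-t / P)) = fun P => P * (P ^ m * exp (-t / P)) := by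
      ext; ring
    rw [hshift, iteratedDeriv_succ_id_mul hsmooth, iteratedDeriv_succ, hlocal.deriv_eq,
      hderiv.deriv, ih hP, sum_range_succ _ (m + 1), Nat.factorial_succ, neg_div]
    generalize ∑ i ∈ range (m + 1), (t / P) ^ i / i.factorial = S
    have hP0 : P ≠ 0 := hP.ne'
    push_cast
    simp only [div_pow]
    field_simp
    ring

theorem iteratedDeriv_aux_fn_general (n : ℕ) (hn : 1 ≤ n) (t : ℝ) (P : ℝ) (hP : 0 < P) :
    iteratedDeriv (n - 1) (fun P : ℝ => P ^ (n - 1) * Real.exp (-t / P)) P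
      = (Nat.factorial (n - 1)) * Real.exp (-t / P) *
          ∑ i ∈ Finset.range n, (t / P) ^ i / (Nat.factorial i) := by
  obtain ⟨m, rfl⟩ := Nat.exists_eq_add_of_le' hn
  exact iteratedDeriv_pow_mul_exp_neg_div t m hP

theorem iteratedDeriv_aux_fn (n : ℕ) (hn : 1 ≤ n) (t : ℝ) (ht : 0 < t) (P : ℝ) (hP : 0 < P) :
    iteratedDeriv (n - 1) (fun P : ℝ => P ^ (n - 1) * Real.exp (-t / P)) P
      = (Nat.factorial (n - 1)) * Real.exp (-t / P) *
          ∑ i ∈ Finset.range n, (t / P) ^ i / (Nat.factorial i) :=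
  iteratedDeriv_aux_fn_general n hn t P hP
end

section
/- Let λ_1 > 0 and t ≥ 0. The limit as (ε_2, ε_3) → (0,0) through pairs with ε_2, ε_3, ε_2 - ε_3 all nonzero of the expression λ_1² e^{-t/λ_1}/(ε_2 ε_3) + (λ_1+ε_2)² e^{-t/(λ_1+ε_2)}/(ε_2(ε_2-ε_3)) + (λ_1+ε_3)² e^{-t/(λ_1+ε_3)}/(ε_3(ε_3-ε_2)) equals e^{-t/λ_1}(1 + t/λ_1 + (t/λ_1)²/2). -/
/-!
The expression is the second divided difference of `f P = P ^ 2 * exp (-t / P)` at the nodes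
`λ₁, λ₁ + ε₂, λ₁ + ε₃`. Applying Rolle's theorem twice to `f` minus its quadratic interpolant
shows that it equals `f'' ξ / 2` for some `ξ` between the nodes, and `f''` is continuous at `λ₁`,
so the limit is `f'' λ₁ / 2 = exp (-t / λ₁) * (1 + t / λ₁ + (t / λ₁) ^ 2 / 2)`.
-/

open Filter Topology Set

noncomputable def secondDivDiff (f : ℝ → ℝ) (a b c : ℝ) : ℝ :=
  f a / ((a - b) * (a - c)) + f b / ((b - a) * (b - c)) + f c / ((c - a) * (c - b))

theorem secondDivDiff_swap_left (f : ℝ → ℝ) (a b c : ℝ) :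
    secondDivDiff f b a c = secondDivDiff f a b c := by
  unfold secondDivDiff; ring

theorem secondDivDiff_swap_right (f : ℝ → ℝ) (a b c : ℝ) :
    secondDivDiff f a c b = secondDivDiff f a b c := by
  unfold secondDivDiff; ring

section MeanValue

variable {f f' f'' : ℝ → ℝ} {a b c : ℝ}

theorem exists_hasDerivAt_hasDerivAt_eq_zero (hab : a < b) (hbc : b < c)
    (hf : ∀ x ∈ Icc a c, HasDerivAt f (f' x) x) (hf' : ∀ x ∈ Icc a c, HasDerivAt f' (f'' x) x)
    (hfab : f a = f b) (hfbc : f b = f c) : ∃ ξ ∈ Ioo a c, f'' ξ = 0 := by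
  have hcont : ContinuousOn f (Icc a c) := fun x hx => (hf x hx).continuousAt.continuousWithinAt
  obtain ⟨ξ₁, hξ₁, hf'ξ₁⟩ := exists_hasDerivAt_eq_zero hab
    (hcont.mono (Icc_subset_Icc_right hbc.le)) hfab
    fun x hx => hf x ⟨hx.1.le, hx.2.le.trans hbc.le⟩
  obtain ⟨ξ₂, hξ₂, hf'ξ₂⟩ := exists_hasDerivAt_eq_zero hbc
    (hcont.mono (Icc_subset_Icc_left hab.le)) hfbc
    fun x hx => hf x ⟨hab.le.trans hx.1.le, hx.2.le⟩
  have hsub : Icc ξ₁ ξ₂ ⊆ Icc a c := Icc_subset_Icc hξ₁.1.le hξ₂.2.le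
  obtain ⟨ξ, hξ, hf''ξ⟩ := exists_hasDerivAt_eq_zero (hξ₁.2.trans hξ₂.1)
    (fun x hx => (hf' x (hsub hx)).continuousAt.continuousWithinAt) (hf'ξ₁.trans hf'ξ₂.symm)
    fun x hx => hf' x (hsub (Ioo_subset_Icc_self hx))
  exact ⟨ξ, ⟨hξ₁.1.trans hξ.1, hξ.2.trans hξ₂.2⟩, hf''ξ⟩

theorem exists_secondDivDiff_eq_of_lt (hab : a < b) (hbc : b < c)
    (hf : ∀ x ∈ Icc a c, HasDerivAt f (f' x) x) (hf' : ∀ x ∈ Icc a c, HasDerivAt f' (f'' x) x) :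
    ∃ ξ ∈ Ioo a c, secondDivDiff f a b c = f'' ξ / 2 := by
  set D := secondDivDiff f a b c
  set s := slope f a b
  -- `g + f a` is `f` minus its quadratic interpolant at `a, b, c`
  let g : ℝ → ℝ := fun x => f x - s * (x - a) - D * ((x - a) * (x - b))
  have hg : ∀ x ∈ Icc a c, HasDerivAt g (f' x - s - D * (2 * x - a - b)) x := fun x hx =>
    ((hf x hx).sub (((hasDerivAt_id x).sub_const a).const_mul s)).sub
      ((((hasDerivAt_id x).sub_const a).mul ((hasDerivAt_id x).sub_const b)).const_mul D)
      |>.congr_deriv (by simp only [id_eq]; ring)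
  have hg' : ∀ x ∈ Icc a c, HasDerivAt (fun x => f' x - s - D * (2 * x - a - b))
      (f'' x - 2 * D) x := fun x hx =>
    ((hf' x hx).sub_const s).sub
      ((((hasDerivAt_id x).const_mul 2).sub_const a |>.sub_const b).const_mul D)
      |>.congr_deriv (by ring)
  have hab' : a - b ≠ 0 := sub_ne_zero.2 hab.ne
  have hac' : a - c ≠ 0 := sub_ne_zero.2 (hab.trans hbc).ne
  have hbc' : b - c ≠ 0 := sub_ne_zero.2 hbc.ne
  have hba' : b - a ≠ 0 := sub_ne_zero.2 hab.ne'
  have hca' : c - a ≠ 0 := sub_ne_zero.2 (hab.trans hbc).ne'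
  have hcb' : c - b ≠ 0 := sub_ne_zero.2 hbc.ne'
  have hgab : g a = g b := by
    simp only [g, s, slope_def_field]
    field_simp
    ring
  have hgbc : g b = g c := by
    simp only [g, s, D, slope_def_field, secondDivDiff]
    field_simp
    ring
  obtain ⟨ξ, hξ, hg''ξ⟩ := exists_hasDerivAt_hasDerivAt_eq_zero hab hbc hg hg' hgab hgbc
  exact ⟨ξ, hξ, by linarith⟩

theorem exists_secondDivDiff_eq {s : Set ℝ} (hs : s.OrdConnected)
    (hf : ∀ x ∈ s, HasDerivAt f (f' x) x) (hf' : ∀ x ∈ s, HasDerivAt f' (f'' x) x)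
    (ha : a ∈ s) (hb : b ∈ s) (hc : c ∈ s) (hab : a ≠ b) (hac : a ≠ c) (hbc : b ≠ c) :
    ∃ ξ ∈ s, secondDivDiff f a b c = f'' ξ / 2 := by
  wlog h₁ : a < b generalizing a b
  · rw [← secondDivDiff_swap_left]
    exact this hb ha hab.symm hbc hac ((not_lt.1 h₁).lt_of_ne hab.symm)
  wlog h₂ : a < c generalizing a b c
  · rw [← secondDivDiff_swap_right, ← secondDivDiff_swap_left]
    have hca : c < a := (not_lt.1 h₂).lt_of_ne hac.symm
    exact this hb hc ha hac.symm hbc.symm hab hca (hca.trans h₁)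
  wlog h₃ : b < c generalizing b c
  · rw [← secondDivDiff_swap_right]
    exact this hb hc hac hab hbc.symm h₂ h₁ ((not_lt.1 h₃).lt_of_ne hbc.symm)
  obtain ⟨ξ, hξ, h⟩ := exists_secondDivDiff_eq_of_lt h₁ h₃
    (fun x hx => hf x (hs.out ha hc hx)) (fun x hx => hf' x (hs.out ha hc hx))
  exact ⟨ξ, hs.out ha hc (Ioo_subset_Icc_self hξ), h⟩

end MeanValue

theorem tendsto_secondDivDiff {f f' f'' : ℝ → ℝ} {x₀ : ℝ}
    (hf : ∀ᶠ x in 𝓝 x₀, HasDerivAt f (f' x) x) (hf' : ∀ᶠ x in 𝓝 x₀, HasDerivAt f' (f'' x) x)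
    (hc : ContinuousAt f'' x₀) :
    Tendsto (fun e : ℝ × ℝ => secondDivDiff f x₀ (x₀ + e.1) (x₀ + e.2))
      (𝓝[{e : ℝ × ℝ | e.1 ≠ 0 ∧ e.2 ≠ 0 ∧ e.1 ≠ e.2}] (0, 0)) (𝓝 (f'' x₀ / 2)) := by
  rw [Metric.tendsto_nhdsWithin_nhds]
  intro ε hε
  obtain ⟨δ, hδ, hδf⟩ := Metric.eventually_nhds_iff_ball.1 ((hf.and hf').and
    (Metric.continuousAt_iff'.1 hc (2 * ε) (by positivity)))
  refine ⟨δ, hδ, fun e ⟨he₁, he₂, he₁₂⟩ hdist => ?_⟩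
  rw [Prod.dist_eq, max_lt_iff] at hdist
  have hmem : ∀ y, dist y 0 < δ → x₀ + y ∈ Metric.ball x₀ δ := fun y hy => by
    simpa [Real.dist_eq] using hy
  obtain ⟨ξ, hξ, hdd⟩ := exists_secondDivDiff_eq (convex_ball x₀ δ).ordConnected
    (fun x hx => (hδf x hx).1.1) (fun x hx => (hδf x hx).1.2) (Metric.mem_ball_self hδ)
    (hmem _ hdist.1) (hmem _ hdist.2) (by simpa using he₁) (by simpa using he₂)
    (by simpa using he₁₂)
  rw [hdd, Real.dist_eq, ← sub_div, abs_div, abs_two, div_lt_iff₀ two_pos, mul_comm]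
  exact (hδf ξ hξ).2

section SurvivalKernel

variable (t : ℝ) {P : ℝ}

theorem hasDerivAt_exp_neg_div (hP : P ≠ 0) :
    HasDerivAt (fun P => Real.exp (-t / P)) (Real.exp (-t / P) * (t / P ^ 2)) P := by
  have h := ((hasDerivAt_inv hP).const_mul (-t)).exp
  simp only [← div_eq_mul_inv] at h
  exact h.congr_deriv (by field_simp)

theorem hasDerivAt_sq_mul_exp_neg_div (hP : P ≠ 0) :
    HasDerivAt (fun P => P ^ 2 * Real.exp (-t / P)) (Real.exp (-t / P) * (2 * P + t)) P :=
  ((hasDerivAt_pow 2 P).mul (hasDerivAt_exp_neg_div t hP)).congr_deriv (by field_simp; ring)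

theorem hasDerivAt_exp_neg_div_mul (hP : P ≠ 0) :
    HasDerivAt (fun P => Real.exp (-t / P) * (2 * P + t))
      (Real.exp (-t / P) * (2 + 2 * t / P + (t / P) ^ 2)) P :=
  ((hasDerivAt_exp_neg_div t hP).mul (((hasDerivAt_id' P).const_mul 2).add_const t)).congr_deriv
    (by field_simp; ring)

end SurvivalKernel

theorem hypoexp_three_limit_general (lam₁ : ℝ) (hlam₁ : 0 < lam₁) (t : ℝ) :
    Tendsto (fun e : ℝ × ℝ =>
        lam₁ ^ 2 * Real.exp (-t / lam₁) / (e.1 * e.2)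
          + (lam₁ + e.1) ^ 2 * Real.exp (-t / (lam₁ + e.1)) / (e.1 * (e.1 - e.2))
          + (lam₁ + e.2) ^ 2 * Real.exp (-t / (lam₁ + e.2)) / (e.2 * (e.2 - e.1)))
      (𝓝[{e : ℝ × ℝ | e.1 ≠ 0 ∧ e.2 ≠ 0 ∧ e.1 ≠ e.2}] (0, 0))
      (𝓝 (Real.exp (-t / lam₁) * (1 + t / lam₁ + (t / lam₁) ^ 2 / 2))) := by
  have hne : ∀ᶠ P in 𝓝 lam₁, P ≠ 0 := eventually_ne_nhds hlam₁.ne'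
  have hc : ContinuousAt (fun P => Real.exp (-t / P) * (2 + 2 * t / P + (t / P) ^ 2)) lam₁ := by
    fun_prop (disch := exact hlam₁.ne')
  convert tendsto_secondDivDiff (hne.mono fun P => hasDerivAt_sq_mul_exp_neg_div t)
    (hne.mono fun P => hasDerivAt_exp_neg_div_mul t) hc using 2
  · simp only [secondDivDiff, sub_add_cancel_left, add_sub_cancel_left, add_sub_add_left_eq_sub]
    ring
  · field_simp

theorem hypoexp_three_limit (lam₁ : ℝ) (hlam₁ : 0 < lam₁) (t : ℝ) (ht : 0 ≤ t) :
    Tendsto (fun e : ℝ × ℝ =>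
        lam₁ ^ 2 * Real.exp (-t / lam₁) / (e.1 * e.2)
          + (lam₁ + e.1) ^ 2 * Real.exp (-t / (lam₁ + e.1)) / (e.1 * (e.1 - e.2))
          + (lam₁ + e.2) ^ 2 * Real.exp (-t / (lam₁ + e.2)) / (e.2 * (e.2 - e.1)))
      (𝓝[{e : ℝ × ℝ | e.1 ≠ 0 ∧ e.2 ≠ 0 ∧ e.1 ≠ e.2}] (0, 0))
      (𝓝 (Real.exp (-t / lam₁) * (1 + t / lam₁ + (t / lam₁) ^ 2 / 2))) :=
  hypoexp_three_limit_general lam₁ hlam₁ t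
end
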